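/- arXiv:2208.04468 — 2 statements merged into one kernel-verified Lean document; each statement's English description precedes it below -/
import Mathlib

section
/- For (k₁,k₂) jointly Gaussian with mean zero, unit variances, and correlation ρ ∈ [-1,1], E[max(0,k₁)·max(0,k₂)] = (1/(2π))·(sin(arccos ρ) + (π - arccos ρ)·ρ). -/
open MeasureTheory ProbabilityTheory Real

/-!
In polar coordinates the standard Gaussian on `ℝ²` has density `(2π)⁻¹ r e^{-r²/2}`, so for an
integrand that is positively homogeneous of degree two the radial integral
`∫₀^∞ r³ e^{-r²/2} dr = 2` splits off and only an integral over the angle remains. Writing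
`ρ = cos θ`, the second linear form becomes `r cos (φ - θ)`, and `(cos φ)₊ (cos (φ - θ))₊` is
supported on the arc `(θ - π/2, π/2]` of length `π - θ`, where it integrates to
`(sin θ + (π - θ) cos θ) / 2`.
-/

lemma gaussianPDFReal_mul_gaussianPDFReal_polar (r φ : ℝ) :
    gaussianPDFReal 0 1 (r * cos φ) * gaussianPDFReal 0 1 (r * sin φ) =
      (2 * π)⁻¹ * rexp (-r ^ 2 / 2) := by
  have hsq : (r * cos φ) ^ 2 + (r * sin φ) ^ 2 = r ^ 2 := by
    linear_combination r ^ 2 * sin_sq_add_cos_sq φ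
  have h2π : (√(2 * π))⁻¹ * (√(2 * π))⁻¹ = (2 * π)⁻¹ := by
    rw [← mul_inv, mul_self_sqrt (by positivity)]
  simp only [gaussianPDFReal, NNReal.coe_one, mul_one, sub_zero]
  rw [← h2π, ← hsq, neg_add, add_div, exp_add]
  ring

lemma integral_gaussianReal_prod_eq_integral_polarCoord (f : ℝ × ℝ → ℝ) :
    ∫ p, f p ∂(gaussianReal 0 1).prod (gaussianReal 0 1) =
      (2 * π)⁻¹ * ∫ p in polarCoord.target, p.1 * rexp (-p.1 ^ 2 / 2) * f (polarCoord.symm p) := by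
  have hmeas := measurable_gaussianPDF 0 1
  rw [gaussianReal_of_var_ne_zero 0 one_ne_zero, prod_withDensity hmeas hmeas,
    ← Measure.volume_eq_prod, integral_withDensity_eq_integral_toReal_smul
      (by fun_prop) (ae_of_all _ fun _ => ENNReal.mul_lt_top gaussianPDF_lt_top gaussianPDF_lt_top),
    ← integral_comp_polarCoord_symm, ← integral_const_mul]
  refine integral_congr_ae (ae_of_all _ fun p => ?_)
  simp only [polarCoord_symm_apply, smul_eq_mul, ENNReal.toReal_mul, gaussianPDF,
    ENNReal.toReal_ofReal (gaussianPDFReal_nonneg _ _ _), gaussianPDFReal_mul_gaussianPDFReal_polar]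
  ring

lemma integral_Ioi_pow_three_mul_exp_neg_sq_div_two :
    ∫ r in Set.Ioi (0 : ℝ), r ^ 3 * rexp (-r ^ 2 / 2) = 2 := by
  have h := integral_rpow_mul_exp_neg_mul_rpow (p := 2) (q := 3) (b := 1 / 2)
    (by norm_num) (by norm_num) (by norm_num)
  norm_num [Gamma_two] at h
  simpa only [neg_div, one_div_mul_eq_div] using h

lemma integral_gaussianReal_prod_of_homogeneous {f : ℝ × ℝ → ℝ}
    (hf : ∀ r > 0, ∀ x y, f (r * x, r * y) = r ^ 2 * f (x, y)) :
    ∫ p, f p ∂(gaussianReal 0 1).prod (gaussianReal 0 1) =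
      π⁻¹ * ∫ φ in Set.Ioo (-π) π, f (cos φ, sin φ) := by
  have hpolar : Set.EqOn (fun p : ℝ × ℝ => p.1 * rexp (-p.1 ^ 2 / 2) * f (polarCoord.symm p))
      (fun p => p.1 ^ 3 * rexp (-p.1 ^ 2 / 2) * f (cos p.2, sin p.2)) polarCoord.target := by
    rintro ⟨r, φ⟩ ⟨hr, -⟩
    simp only [polarCoord_symm_apply, hf r hr]
    ring
  rw [integral_gaussianReal_prod_eq_integral_polarCoord,
    setIntegral_congr_fun polarCoord.open_target.measurableSet hpolar, polarCoord_target,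
    Measure.volume_eq_prod, ← Measure.prod_restrict,
    integral_prod_mul (fun r => r ^ 3 * rexp (-r ^ 2 / 2)) (fun φ => f (cos φ, sin φ)),
    integral_Ioi_pow_three_mul_exp_neg_sq_div_two]
  ring

lemma cos_sub_arccos {ρ : ℝ} (h₁ : -1 ≤ ρ) (h₂ : ρ ≤ 1) (φ : ℝ) :
    cos (φ - arccos ρ) = ρ * cos φ + √(1 - ρ ^ 2) * sin φ := by
  rw [cos_sub, cos_arccos h₁ h₂, sin_arccos]
  ring

lemma integral_cos_mul_cos_sub (θ a b : ℝ) :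
    ∫ x in a..b, cos x * cos (x - θ) =
      (sin (2 * b - θ) - sin (2 * a - θ)) / 4 + (b - a) * cos θ / 2 := by
  have hderiv : ∀ x, HasDerivAt (fun x => sin (2 * x - θ) / 4 + x * cos θ / 2)
      (cos x * cos (x - θ)) x := by
    intro x
    have h := ((((hasDerivAt_id x).const_mul 2).sub_const θ).sin.div_const 4).add
      ((hasDerivAt_id x).mul_const (cos θ) |>.div_const 2)
    refine h.congr_deriv ?_
    have hθ : cos θ = cos x * cos (x - θ) + sin x * sin (x - θ) := by
      rw [← cos_sub, sub_sub_cancel]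
    simp only [id, mul_one, one_mul]
    rw [show 2 * x - θ = x + (x - θ) by ring, cos_add, hθ]
    ring
  rw [intervalIntegral.integral_eq_sub_of_hasDerivAt (fun x _ => hderiv x)
    ((by fun_prop : Continuous fun x => cos x * cos (x - θ)).intervalIntegrable _ _)]
  ring

lemma posPart_cos_mul_posPart_cos_sub_eqOn {θ : ℝ} (h0 : 0 ≤ θ) (hπ : θ ≤ π) :
    Set.EqOn (fun φ => max 0 (cos φ) * max 0 (cos (φ - θ)))
      ((Set.Ioc (θ - π / 2) (π / 2)).indicator fun φ => cos φ * cos (φ - θ))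
      (Set.Ioo (-π) π) := by
  rintro φ ⟨hφ₁, hφ₂⟩
  by_cases hmem : φ ∈ Set.Ioc (θ - π / 2) (π / 2)
  · have hc₁ : 0 ≤ cos φ := cos_nonneg_of_mem_Icc ⟨by linarith [hmem.1], hmem.2⟩
    have hc₂ : 0 ≤ cos (φ - θ) :=
      cos_nonneg_of_mem_Icc ⟨by linarith [hmem.1], by linarith [hmem.2]⟩
    simp only [Set.indicator_of_mem hmem, max_eq_right hc₁, max_eq_right hc₂]
  · rw [Set.indicator_of_notMem hmem]
    suffices cos φ ≤ 0 ∨ cos (φ - θ) ≤ 0 by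
      rcases this with h | h <;> simp [max_eq_left h]
    simp only [Set.mem_Ioc, not_and_or, not_lt, not_le] at hmem
    rcases hmem with hle | hgt
    · by_cases hφ : φ ≤ -(π / 2)
      · left
        rw [← cos_neg]
        exact cos_nonpos_of_pi_div_two_le_of_le (by linarith) (by linarith)
      · right
        rw [← cos_neg, neg_sub]
        exact cos_nonpos_of_pi_div_two_le_of_le (by linarith) (by linarith)
    · exact Or.inl (cos_nonpos_of_pi_div_two_le_of_le hgt.le (by linarith))

lemma integral_posPart_cos_mul_posPart_cos_sub {θ : ℝ} (h0 : 0 ≤ θ) (hπ : θ ≤ π) :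
    ∫ φ in Set.Ioo (-π) π, max 0 (cos φ) * max 0 (cos (φ - θ)) =
      (sin θ + (π - θ) * cos θ) / 2 := by
  have hsub : Set.Ioc (θ - π / 2) (π / 2) ⊆ Set.Ioo (-π) π :=
    fun φ ⟨h₁, h₂⟩ => ⟨by linarith [pi_pos], by linarith [pi_pos]⟩
  rw [setIntegral_congr_fun measurableSet_Ioo (posPart_cos_mul_posPart_cos_sub_eqOn h0 hπ),
    setIntegral_indicator measurableSet_Ioc, Set.inter_eq_self_of_subset_right hsub,
    ← intervalIntegral.integral_of_le (by linarith), integral_cos_mul_cos_sub,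
    show 2 * (π / 2) - θ = π - θ by ring, show 2 * (θ - π / 2) - θ = -(π - θ) by ring,
    sin_neg, sin_pi_sub]
  ring

/-- For `(k₁, k₂)` jointly Gaussian, mean zero, unit variances, correlation
`ρ ∈ [-1,1]` (realized as `k₁ = z₁`, `k₂ = ρ z₁ + √(1-ρ²) z₂` for independent standard
normals `z₁, z₂`), `E[max(0,k₁) max(0,k₂)] = (1/(2π)) (sin(arccos ρ) + (π - arccos ρ) ρ)`. -/
theorem arcCosine_kernel_degree_one (ρ : ℝ) (hρ : ρ ∈ Set.Icc (-1 : ℝ) 1) :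
    ∫ p : ℝ × ℝ, max 0 p.1 * max 0 (ρ * p.1 + Real.sqrt (1 - ρ ^ 2) * p.2)
        ∂((gaussianReal 0 1).prod (gaussianReal 0 1)) =
      (1 / (2 * π)) * (Real.sin (Real.arccos ρ) + (π - Real.arccos ρ) * ρ) := by
  obtain ⟨hρ₁, hρ₂⟩ := hρ
  have hom : ∀ r > 0, ∀ x y : ℝ,
      max 0 (r * x) * max 0 (ρ * (r * x) + √(1 - ρ ^ 2) * (r * y)) =
        r ^ 2 * (max 0 x * max 0 (ρ * x + √(1 - ρ ^ 2) * y)) := by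
    intro r hr x y
    have hpos : ∀ a, max 0 (r * a) = r * max 0 a := fun a => by
      rw [mul_max_of_nonneg _ _ hr.le, mul_zero]
    rw [show ρ * (r * x) + √(1 - ρ ^ 2) * (r * y) = r * (ρ * x + √(1 - ρ ^ 2) * y) by ring,
      hpos, hpos]
    ring
  rw [integral_gaussianReal_prod_of_homogeneous hom]
  simp only [← cos_sub_arccos hρ₁ hρ₂]
  rw [integral_posPart_cos_mul_posPart_cos_sub (arccos_nonneg ρ) (arccos_le_pi ρ),
    cos_arccos hρ₁ hρ₂]
  field_simp
end

section
/- Define F_q(ρ) = E[max{h₁,...,h_q}·max{h₁',...,h_q'}] where h₁,...,h_q are i.i.d. N(0,1), h₁',...,h_q' are i.i.d. N(0,1), and Cov(h_l, h_m') = ρ·1{l=m}. Then F₂(ρ) = 2·E[max(0,k₁)·max(0,k₂)] where (k₁,k₂) is mean-zero Gaussian with unit variances and correlation ρ. -/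
/-!
Write `h_i = X P_i` and `h_i' = Y P_i` with `P_i = (z_i, w_i)` i.i.d. standard Gaussian in `ℝ²`,
`X = fst` and `Y = ρ • fst + √(1 - ρ²) • snd`. The law of `(P₀, P₁)` is invariant under the
rotation by `π/4`, after which `max (X P₀) (X P₁) = (X P₁ + |X P₀|) / √2`, and likewise for `Y`.
Expanding, independence and centering kill the cross terms: `F₂ = (E[X Y] + E[|X| |Y|]) / 2`.
On the other side, `P ↦ -P` preserves the law and
`relu a relu b + relu (-a) relu (-b) = (a b + |a| |b|) / 2`, so
`E[relu X relu Y] = (E[X Y] + E[|X| |Y|]) / 4`.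
-/
open MeasureTheory ProbabilityTheory Real

/-- `F_q(ρ) = E[max{h₁,…,h_q} ⬝ max{h₁',…,h_q'}]` where the pairs `(h_i, h_i')` are i.i.d.
bivariate standard normals with correlation `ρ`, realized as `h_i = z_i`,
`h_i' = ρ z_i + √(1-ρ²) w_i` for i.i.d. standard normals `z, w`. -/
noncomputable def Fq (q : ℕ) (ρ : ℝ) : ℝ :=
  ∫ p : (Fin q → ℝ) × (Fin q → ℝ),
    (⨆ i, p.1 i) * (⨆ i, ρ * p.1 i + Real.sqrt (1 - ρ ^ 2) * p.2 i)
    ∂((Measure.pi fun _ : Fin q => gaussianReal 0 1).prod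
        (Measure.pi fun _ : Fin q => gaussianReal 0 1))

lemma iSup_fin_two {α : Type*} [ConditionallyCompleteLinearOrder α] (f : Fin 2 → α) :
    ⨆ i, f i = max (f 0) (f 1) :=
  le_antisymm (ciSup_le fun i => by fin_cases i <;> simp)
    (max_le (le_ciSup (Finite.bddAbove_range f) 0) (le_ciSup (Finite.bddAbove_range f) 1))

lemma max_add_sub_eq_add_abs (a b : ℝ) : max (b + a) (b - a) = b + |a| := by
  rcases le_total 0 a with h | h
  · rw [max_eq_left (by linarith), abs_of_nonneg h]
  · rw [max_eq_right (by linarith), abs_of_nonpos h]; ring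

lemma max_zero_mul_max_zero_add_max_zero_neg_mul_max_zero_neg (a b : ℝ) :
    max 0 a * max 0 b + max 0 (-a) * max 0 (-b) = (a * b + |a| * |b|) / 2 := by
  rcases le_total 0 a with ha | ha <;> rcases le_total 0 b with hb | hb <;>
    simp [ha, hb, abs_of_nonneg, abs_of_nonpos]

lemma max_apply_rotation_pi_div_four {E : Type*} [NormedAddCommGroup E] [NormedSpace ℝ E]
    (L : StrongDual ℝ E) (p : E × E) :
    max (L (ContinuousLinearMap.rotation (π / 4) p).1)
        (L (ContinuousLinearMap.rotation (π / 4) p).2) = √2 / 2 * (L p.2 + |L p.1|) := by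
  rw [← max_add_sub_eq_add_abs, mul_max_of_nonneg _ _ (by positivity)]
  simp only [ContinuousLinearMap.rotation_apply, map_add, map_smul, smul_eq_mul, cos_pi_div_four,
    sin_pi_div_four]
  congr 1 <;> ring

section NegInvariant

variable {E : Type*} [MeasurableSpace E] [AddGroup E] [MeasurableNeg E] {μ : Measure E}
  [μ.IsNegInvariant]

lemma integral_max_zero_mul_max_zero_of_odd {X Y : E → ℝ} (hX : MemLp X 2 μ) (hY : MemLp Y 2 μ)
    (hX_neg : ∀ x, X (-x) = -X x) (hY_neg : ∀ x, Y (-x) = -Y x) :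
    ∫ x, max 0 (X x) * max 0 (Y x) ∂μ = (∫ x, X x * Y x ∂μ + ∫ x, |X x| * |Y x| ∂μ) / 4 := by
  have hX_pos : MemLp (fun x => max 0 (X x)) 2 μ := (MemLp.zero (ε := ℝ)).sup hX
  have hY_pos : MemLp (fun x => max 0 (Y x)) 2 μ := (MemLp.zero (ε := ℝ)).sup hY
  have hf : Integrable (fun x => max 0 (X x) * max 0 (Y x)) μ := hX_pos.integrable_mul hY_pos
  calc ∫ x, max 0 (X x) * max 0 (Y x) ∂μ
      = (∫ x, max 0 (X x) * max 0 (Y x) ∂μ + ∫ x, max 0 (X (-x)) * max 0 (Y (-x)) ∂μ) / 2 := by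
        rw [integral_neg_eq_self (fun x => max 0 (X x) * max 0 (Y x))]; ring
    _ = ∫ x, (X x * Y x + |X x| * |Y x|) / 4 ∂μ := by
        rw [← integral_add hf hf.comp_neg, ← integral_div]
        congr 1 with x
        rw [hX_neg, hY_neg, max_zero_mul_max_zero_add_max_zero_neg_mul_max_zero_neg]; ring
    _ = _ := by
        have hXY : Integrable (fun x => X x * Y x) μ := hX.integrable_mul hY
        have hXY_abs : Integrable (fun x => |X x| * |Y x|) μ := hX.abs.integrable_mul hY.abs
        rw [integral_div, integral_add hXY hXY_abs]

end NegInvariant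

lemma integral_prod_add_mul_add {α : Type*} [MeasurableSpace α] {μ : Measure α}
    [IsProbabilityMeasure μ] {a b c d : α → ℝ} (ha : MemLp a 2 μ) (hb : MemLp b 2 μ)
    (hc : MemLp c 2 μ) (hd : MemLp d 2 μ) :
    ∫ p, (a p.2 + b p.1) * (c p.2 + d p.1) ∂μ.prod μ =
      ∫ x, a x * c x ∂μ + ∫ x, b x * d x ∂μ + (∫ x, b x ∂μ) * (∫ x, c x ∂μ)
        + (∫ x, d x ∂μ) * (∫ x, a x ∂μ) := by
  have hac : Integrable (fun p : α × α => a p.2 * c p.2) (μ.prod μ) :=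
    (ha.integrable_mul hc).comp_snd μ
  have hbd : Integrable (fun p : α × α => b p.1 * d p.1) (μ.prod μ) :=
    (hb.integrable_mul hd).comp_fst μ
  have hbc : Integrable (fun p : α × α => b p.1 * c p.2) (μ.prod μ) :=
    (hb.integrable one_le_two).mul_prod (hc.integrable one_le_two)
  have hda : Integrable (fun p : α × α => d p.1 * a p.2) (μ.prod μ) :=
    (hd.integrable one_le_two).mul_prod (ha.integrable one_le_two)
  calc ∫ p, (a p.2 + b p.1) * (c p.2 + d p.1) ∂μ.prod μ
      = ∫ p, (a p.2 * c p.2 + b p.1 * d p.1) + (b p.1 * c p.2 + d p.1 * a p.2) ∂μ.prod μ := by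
        congr 1 with p; ring
    _ = _ := by
        rw [integral_add (hac.fun_add hbd) (hbc.fun_add hda), integral_add hac hbd,
          integral_add hbc hda, integral_fun_snd (fun x => a x * c x),
          integral_fun_fst (fun x => b x * d x),
          integral_prod_mul b c, integral_prod_mul d a]
        simp only [probReal_univ, one_smul, add_assoc]

namespace ProbabilityTheory.IsGaussian

variable {E : Type*} [NormedAddCommGroup E] [NormedSpace ℝ E] [MeasurableSpace E] [BorelSpace E]
  [CompleteSpace E] [SecondCountableTopology E] {μ : Measure E} [IsGaussian μ]

lemma isNegInvariant (hμ : μ[id] = 0) : μ.IsNegInvariant := by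
  constructor
  change μ.map (-ContinuousLinearMap.id ℝ E) = μ
  refine Measure.ext_of_charFunDual (funext fun L => ?_)
  rw [charFunDual_map, charFunDual_eq_of_integral_eq_zero hμ,
    charFunDual_eq_of_integral_eq_zero hμ]
  simp [variance_neg]

lemma integral_eq_integral_comp_rotation (hμ : μ[id] = 0) (θ : ℝ) {f : E × E → ℝ}
    (hf : Continuous f) :
    ∫ p, f p ∂μ.prod μ = ∫ p, f (ContinuousLinearMap.rotation θ p) ∂μ.prod μ := by
  conv_lhs => rw [← map_rotation_eq_self hμ θ]
  exact integral_map (by fun_prop) hf.aestronglyMeasurable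

theorem integral_max_mul_max (hμ : μ[id] = 0) (X Y : StrongDual ℝ E) :
    ∫ p, max (X p.1) (X p.2) * max (Y p.1) (Y p.2) ∂μ.prod μ =
      (∫ x, X x * Y x ∂μ + ∫ x, |X x| * |Y x| ∂μ) / 2 := by
  have hmean (L : StrongDual ℝ E) : ∫ x, L x ∂μ = 0 := by
    rw [integral_dual, show ∫ x, x ∂μ = 0 from hμ, map_zero]
  have hX := memLp_dual μ X 2 (by simp)
  have hY := memLp_dual μ Y 2 (by simp)
  calc ∫ p, max (X p.1) (X p.2) * max (Y p.1) (Y p.2) ∂μ.prod μ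
      = (∫ p, (X p.2 + |X p.1|) * (Y p.2 + |Y p.1|) ∂μ.prod μ) / 2 := by
        rw [integral_eq_integral_comp_rotation hμ (π / 4) (by fun_prop), ← integral_div]
        congr 1 with p
        rw [max_apply_rotation_pi_div_four, max_apply_rotation_pi_div_four]
        linear_combination (X p.2 + |X p.1|) * (Y p.2 + |Y p.1|) / 4 * mul_self_sqrt zero_le_two
    _ = _ := by
        rw [integral_prod_add_mul_add (b := fun x => |X x|) (d := fun x => |Y x|)
          hX hX.abs hY hY.abs, hmean, hmean]
        ring

theorem integral_max_mul_max_eq_two_mul_integral_max_zero_mul_max_zero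
    (hμ : μ[id] = 0) (X Y : StrongDual ℝ E) :
    ∫ p, max (X p.1) (X p.2) * max (Y p.1) (Y p.2) ∂μ.prod μ =
      2 * ∫ x, max 0 (X x) * max 0 (Y x) ∂μ := by
  have := isNegInvariant hμ
  rw [integral_max_mul_max hμ, integral_max_zero_mul_max_zero_of_odd
    (memLp_dual μ X 2 (by simp)) (memLp_dual μ Y 2 (by simp))
    (map_neg X) (map_neg Y)]
  ring

end ProbabilityTheory.IsGaussian

lemma integral_id_gaussianReal_prod (m₁ m₂ : ℝ) (v₁ v₂ : NNReal) :
    ∫ p, p ∂(gaussianReal m₁ v₁).prod (gaussianReal m₂ v₂) = (m₁, m₂) := by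
  have h : Integrable (fun p => p) ((gaussianReal m₁ v₁).prod (gaussianReal m₂ v₂)) :=
    IsGaussian.integrable_id
  ext
  · rw [fst_integral h]
    simp [integral_fun_fst (fun x : ℝ => x), integral_id_gaussianReal]
  · rw [snd_integral h]
    simp [integral_fun_snd (fun x : ℝ => x), integral_id_gaussianReal]

lemma integral_pi_prod_pi_finTwo {α β : Type*} [MeasurableSpace α] [MeasurableSpace β]
    (μ : Measure α) (ν : Measure β) [SigmaFinite μ] [SigmaFinite ν] (g : (α × β) × (α × β) → ℝ) :
    ∫ p : (Fin 2 → α) × (Fin 2 → β), g ((p.1 0, p.2 0), (p.1 1, p.2 1))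
        ∂(Measure.pi fun _ => μ).prod (Measure.pi fun _ => ν)
      = ∫ q, g q ∂(μ.prod ν).prod (μ.prod ν) :=
  MeasurePreserving.integral_comp'
    (f := (MeasurableEquiv.arrowProdEquivProdArrow α β (Fin 2)).symm.trans
      MeasurableEquiv.finTwoArrow)
    ((measurePreserving_finTwoArrow (μ.prod ν)).comp
      ((measurePreserving_arrowProdEquivProdArrow α β (Fin 2) _ _).symm _)) g

theorem F_two_eq_two_relu_expectation_general (ρ : ℝ) :
    Fq 2 ρ =
      2 * ∫ p : ℝ × ℝ, max 0 p.1 * max 0 (ρ * p.1 + Real.sqrt (1 - ρ ^ 2) * p.2)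
        ∂((gaussianReal 0 1).prod (gaussianReal 0 1)) := by
  have hμ : ∫ p, id p ∂(gaussianReal 0 1).prod (gaussianReal 0 1) = 0 :=
    (integral_id_gaussianReal_prod 0 0 1 1).trans Prod.mk_zero_zero
  have key := IsGaussian.integral_max_mul_max_eq_two_mul_integral_max_zero_mul_max_zero hμ
    (ContinuousLinearMap.fst ℝ ℝ ℝ)
    (ρ • ContinuousLinearMap.fst ℝ ℝ ℝ + √(1 - ρ ^ 2) • ContinuousLinearMap.snd ℝ ℝ ℝ)
  rw [← integral_pi_prod_pi_finTwo] at key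
  simp only [Fq, iSup_fin_two]
  simpa using key

/-- `F₂(ρ) = 2 E[max(0,k₁) max(0,k₂)]` where `(k₁,k₂)` is centered Gaussian
with unit variances and correlation `ρ` (realized as `k₁ = z₁`, `k₂ = ρ z₁ + √(1-ρ²) z₂`). -/
theorem F_two_eq_two_relu_expectation (ρ : ℝ) (hρ : ρ ∈ Set.Icc (-1 : ℝ) 1) :
    Fq 2 ρ =
      2 * ∫ p : ℝ × ℝ, max 0 p.1 * max 0 (ρ * p.1 + Real.sqrt (1 - ρ ^ 2) * p.2)
        ∂((gaussianReal 0 1).prod (gaussianReal 0 1)) :=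
  F_two_eq_two_relu_expectation_general ρ
end
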